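/- Let G be the spinal graph of Example 7 with spine ℕ, dimensions parameters δ > D > 1, α = (D−1)/δ, fibres π⁻¹(n) = B_{P_n}(o_n, n^α) with |B_{P_n}(x,r)| ≃ r^δ uniformly, and P_n doubling with uniform constants. Then there is a constant c > 0 such that for every vertex x ∈ V(G) and every integer r ≥ 1, |B_G(x, r)| ≥ c r^D. -/

import Mathlib

/-!
Write `x = (n, z)` and `k = d(o n, z)`. If `k ≥ r / 2`, the point `y` within `r / 2` of `z`
on a geodesic from `o n` to `z` has its whole `P n`-ball of radius `r / 4` inside the fibre and
inside `B_G(x, r)`, so `|B_G(x, r)| ≳ r ^ δ ≥ r ^ D`. If `k < r / 2`, the spine vertices `n + j`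
with `r / 8 ≤ j ≤ r / 4` are within `k + j` of `x`, and each carries the `P (n + j)`-ball of
radius `≈ (r / 8) ^ α ≤ (n + j) ^ α` around its root, which lies in the fibre; these `≈ r`
disjoint balls give `|B_G(x, r)| ≳ r · r ^ (α δ) = r ^ D`. Small radii only affect the constant.

Distances in `G` are controlled by geodesics of `P n` that stay in the fibre: a geodesic from `y`
to `p` stays within `d(o n, y) + d(y, p)` of `o n`.
-/

/-- The closed combinatorial ball of (real) radius `r` around `x`. -/
def gball {V : Type*} (G : SimpleGraph V) (x : V) (r : ℝ) : Set V :=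
  {y | (G.dist x y : ℝ) ≤ r}

/-- The vertices of the fibre glued at `n ∈ ℕ`: the ball `B_{P n}(o n, n ^ α)`. -/
def FibVert {W : ℕ → Type*} (P : ∀ n, SimpleGraph (W n)) (o : ∀ n, W n) (α : ℝ)
    (n : ℕ) : Type _ :=
  {z : W n // ((P n).dist (o n) z : ℝ) ≤ (n : ℝ) ^ α}

/-- The spinal graph over `Σ = ℕ` obtained by gluing, at each `n ∈ ℕ`, the induced
subgraph of `P n` on the ball `B_{P n}(o n, n ^ α)` to the vertex `n` of the path
graph `ℕ` at the distinguished point `o n`. -/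
def SpineGlued {W : ℕ → Type*} (P : ∀ n, SimpleGraph (W n)) (o : ∀ n, W n) (α : ℝ) :
    SimpleGraph (Σ n, FibVert P o α n) :=
  SimpleGraph.fromRel (fun p q =>
    (∃ h : p.1 = q.1, (P q.1).Adj (h ▸ p.2.1) q.2.1) ∨
    (p.2.1 = o p.1 ∧ q.2.1 = o q.1 ∧ q.1 = p.1 + 1))

namespace SimpleGraph

variable {V : Type*} {G : SimpleGraph V} {u v x : V}

lemma Walk.dist_le_of_mem_support {w : G.Walk u v} (hw : w.length = G.dist u v)
    (hx : x ∈ w.support) : G.dist u x ≤ G.dist u v := by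
  classical
  calc G.dist u x ≤ (w.takeUntil x hx).length := dist_le _
    _ ≤ G.dist u v := hw ▸ w.length_takeUntil_le_length hx

lemma Reachable.exists_dist_le_dist_sub (h : G.Reachable u v) (m : ℕ) :
    ∃ y, G.dist u y ≤ G.dist u v - m ∧ G.dist y v ≤ m := by
  obtain ⟨w, hw⟩ := h.exists_walk_length_eq_dist
  refine ⟨w.getVert (G.dist u v - m), ?_, ?_⟩
  · calc _ ≤ (w.take _).length := dist_le _
      _ ≤ _ := by rw [Walk.take_length]; exact min_le_left _ _
  · calc _ ≤ (w.drop _).length := dist_le _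
      _ ≤ m := by rw [Walk.drop_length, hw]; omega

end SimpleGraph

section gball

variable {V : Type*} {G : SimpleGraph V} {x y : V}

lemma mem_gball {r : ℝ} : y ∈ gball G x r ↔ (G.dist x y : ℝ) ≤ r := Iff.rfl

lemma mem_gball_natCast {r : ℕ} : y ∈ gball G x r ↔ G.dist x y ≤ r := by
  rw [mem_gball, Nat.cast_le]

lemma gball_mono {r s : ℝ} (h : r ≤ s) : gball G x r ⊆ gball G x s :=
  fun _ hy => le_trans hy h

lemma mem_gball_self {r : ℝ} (hr : 0 ≤ r) : x ∈ gball G x r := by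
  simpa [mem_gball] using hr

lemma gball_finite_of_ncard_pos (h : ∀ r : ℕ, 1 ≤ r → 0 < (gball G x r).ncard) (ρ : ℝ) :
    (gball G x ρ).Finite := by
  refine (Set.finite_of_ncard_pos (h (⌈ρ⌉₊ + 1) (by omega))).subset (gball_mono ?_)
  push_cast
  linarith [Nat.le_ceil ρ]

end gball

namespace SpineGlued

variable {W : ℕ → Type*} {P : ∀ n, SimpleGraph (W n)} {o : ∀ n, W n} {α : ℝ} {n : ℕ}

variable (P o α) in
def root (n : ℕ) : FibVert P o α n :=
  ⟨o n, by simp only [SimpleGraph.dist_self, Nat.cast_zero]; positivity⟩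

lemma adj_mk_mk {p q : FibVert P o α n} (h : (P n).Adj p.1 q.1) :
    (SpineGlued P o α).Adj ⟨n, p⟩ ⟨n, q⟩ := by
  rw [SpineGlued, SimpleGraph.fromRel_adj]
  refine ⟨fun hpq => h.ne ?_, Or.inl (Or.inl ⟨rfl, h⟩)⟩
  rw [Sigma.mk.inj_iff] at hpq
  exact congrArg Subtype.val (eq_of_heq hpq.2)

lemma adj_root_succ (n : ℕ) :
    (SpineGlued P o α).Adj ⟨n, root P o α n⟩ ⟨n + 1, root P o α (n + 1)⟩ := by
  rw [SpineGlued, SimpleGraph.fromRel_adj]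
  refine ⟨fun h => ?_, Or.inl (Or.inr ⟨rfl, rfl, rfl⟩)⟩
  have := congrArg Sigma.fst h
  simp at this

lemma fst_le_fst_add_one_of_adj {p q : Σ n, FibVert P o α n} (h : (SpineGlued P o α).Adj p q) :
    q.1 ≤ p.1 + 1 := by
  rw [SpineGlued, SimpleGraph.fromRel_adj] at h
  rcases h.2 with (⟨h', -⟩ | ⟨-, -, h'⟩) | (⟨h', -⟩ | ⟨-, -, h'⟩) <;> omega

lemma fst_le_fst_add_length {p q : Σ n, FibVert P o α n} (w : (SpineGlued P o α).Walk p q) :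
    q.1 ≤ p.1 + w.length := by
  induction w with
  | nil => simp
  | cons h _ ih =>
      have := fst_le_fst_add_one_of_adj h
      rw [SimpleGraph.Walk.length_cons]
      omega

variable (P o α) in
def fibreHom (n : ℕ) :
    (P n).induce {z | ((P n).dist (o n) z : ℝ) ≤ (n : ℝ) ^ α} →g SpineGlued P o α where
  toFun z := ⟨n, z⟩
  map_rel' h := adj_mk_mk (SimpleGraph.induce_adj.1 h)

lemma exists_walk_mk_mk (hconn : (P n).Connected) (y p : FibVert P o α n)
    (h : ((P n).dist (o n) y.1 + (P n).dist y.1 p.1 : ℝ) ≤ (n : ℝ) ^ α) :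
    ∃ w : (SpineGlued P o α).Walk ⟨n, y⟩ ⟨n, p⟩, w.length = (P n).dist y.1 p.1 := by
  obtain ⟨w, hw⟩ := hconn.exists_walk_length_eq_dist y.1 p.1
  have hsupp : ∀ v ∈ w.support, v ∈ {z | ((P n).dist (o n) z : ℝ) ≤ (n : ℝ) ^ α} := by
    intro v hv
    have hov : (P n).dist (o n) v ≤ (P n).dist (o n) y.1 + (P n).dist y.1 v :=
      hconn.dist_triangle
    have hyv := w.dist_le_of_mem_support hw hv
    refine le_trans ?_ h
    exact_mod_cast hov.trans (by omega)
  have hlen : (w.induce _ hsupp).length = w.length := by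
    have := congrArg SimpleGraph.Walk.length (w.map_induce hsupp)
    rwa [SimpleGraph.Walk.length_map] at this
  exact ⟨(w.induce _ hsupp).map (fibreHom P o α n),
    (SimpleGraph.Walk.length_map _ _).trans (hlen.trans hw)⟩

lemma exists_walk_root_root {n m : ℕ} (h : n ≤ m) :
    ∃ w : (SpineGlued P o α).Walk ⟨n, root P o α n⟩ ⟨m, root P o α m⟩, w.length = m - n := by
  induction m, h using Nat.le_induction with
  | base => exact ⟨.nil, by simp⟩
  | succ m hnm ih =>
      obtain ⟨w, hw⟩ := ih
      exact ⟨w.concat (adj_root_succ m), by rw [SimpleGraph.Walk.length_concat, hw]; omega⟩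

lemma exists_walk_root_mk (hconn : (P n).Connected) (z : FibVert P o α n) :
    ∃ w : (SpineGlued P o α).Walk ⟨n, root P o α n⟩ ⟨n, z⟩, w.length = (P n).dist (o n) z.1 :=
  exists_walk_mk_mk hconn (root P o α n) z (by simpa [root] using z.2)

lemma connected (hconn : ∀ n, (P n).Connected) : (SpineGlued P o α).Connected := by
  refine (SimpleGraph.connected_iff_exists_forall_reachable _).2 ⟨⟨0, root P o α 0⟩, ?_⟩
  rintro ⟨n, z⟩
  obtain ⟨w₁, -⟩ := exists_walk_root_root (P := P) (o := o) (α := α) (Nat.zero_le n)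
  obtain ⟨w₂, -⟩ := exists_walk_root_mk (hconn n) z
  exact ⟨w₁.append w₂⟩

lemma dist_mk_mk_le (hconn : (P n).Connected) (y p : FibVert P o α n)
    (h : ((P n).dist (o n) y.1 + (P n).dist y.1 p.1 : ℝ) ≤ (n : ℝ) ^ α) :
    (SpineGlued P o α).dist ⟨n, y⟩ ⟨n, p⟩ ≤ (P n).dist y.1 p.1 :=
  let ⟨w, hw⟩ := exists_walk_mk_mk hconn y p h
  hw ▸ SimpleGraph.dist_le w

lemma dist_root_root_le {n m : ℕ} (h : n ≤ m) :
    (SpineGlued P o α).dist ⟨n, root P o α n⟩ ⟨m, root P o α m⟩ ≤ m - n :=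
  let ⟨w, hw⟩ := exists_walk_root_root h
  hw ▸ SimpleGraph.dist_le w

lemma dist_root_mk_le (hconn : (P n).Connected) (z : FibVert P o α n) :
    (SpineGlued P o α).dist ⟨n, root P o α n⟩ ⟨n, z⟩ ≤ (P n).dist (o n) z.1 :=
  let ⟨w, hw⟩ := exists_walk_root_mk hconn z
  hw ▸ SimpleGraph.dist_le w

lemma finite_fibVert (hvol : ∀ r : ℕ, 1 ≤ r → 0 < (gball (P n) (o n) r).ncard) :
    Finite (FibVert P o α n) :=
  (gball_finite_of_ncard_pos hvol _).to_subtype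

lemma ncard_setOf_mem_gball (hconn : (P n).Connected) (y : W n) (t : ℝ)
    (h : ((P n).dist (o n) y : ℝ) + t ≤ (n : ℝ) ^ α) :
    {z : FibVert P o α n | z.1 ∈ gball (P n) y t}.ncard = (gball (P n) y t).ncard := by
  have hfib : ∀ w ∈ gball (P n) y t, ((P n).dist (o n) w : ℝ) ≤ (n : ℝ) ^ α := by
    intro w hw
    have hyw : (P n).dist (o n) w ≤ (P n).dist (o n) y + (P n).dist y w := hconn.dist_triangle
    rw [mem_gball] at hw
    have : ((P n).dist (o n) w : ℝ) ≤ (P n).dist (o n) y + (P n).dist y w := by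
      exact_mod_cast hyw
    linarith
  have himage : (fun z : FibVert P o α n => z.1) '' {z | z.1 ∈ gball (P n) y t} =
      gball (P n) y t := by
    ext w
    exact ⟨fun ⟨_, hz, hzw⟩ => hzw ▸ hz, fun hw => ⟨⟨w, hfib w hw⟩, hw, rfl⟩⟩
  calc _ = ((fun z : FibVert P o α n => z.1) '' {z | z.1 ∈ gball (P n) y t}).ncard :=
        (Set.ncard_image_of_injective _ fun _ _ => Subtype.ext).symm
    _ = _ := by rw [himage]

section

variable [∀ n, Finite (FibVert P o α n)] {c δ D : ℝ}

lemma gball_finite (hconn : ∀ n, (P n).Connected)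
    (x : Σ n, FibVert P o α n) (r : ℕ) : (gball (SpineGlued P o α) x r).Finite := by
  refine ((Finset.range (x.1 + r + 1)).finite_toSet.biUnion
    fun m _ => Set.finite_range (Sigma.mk (β := FibVert P o α) m)).subset ?_
  intro y hy
  obtain ⟨w, hw⟩ := (connected hconn).exists_walk_length_eq_dist x y
  have := fst_le_fst_add_length w
  rw [mem_gball_natCast] at hy
  simp only [Set.mem_iUnion, Set.mem_range, Finset.coe_range, Set.mem_Iio]
  exact ⟨y.1, by omega, y.2, rfl⟩

lemma sum_ncard_gball_le (hconn : ∀ n, (P n).Connected)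
    (x : Σ n, FibVert P o α n) (r t : ℕ) (I : Finset ℕ) (y : ∀ i, FibVert P o α i)
    (hy : ∀ i ∈ I, ((P i).dist (o i) (y i).1 : ℝ) + t ≤ (i : ℝ) ^ α)
    (hx : ∀ i ∈ I, (SpineGlued P o α).dist x ⟨i, y i⟩ + t ≤ r) :
    ∑ i ∈ I, (gball (P i) (y i).1 t).ncard ≤ (gball (SpineGlued P o α) x r).ncard := by
  let A i : Finset (FibVert P o α i) :=
    (Set.toFinite {z : FibVert P o α i | z.1 ∈ gball (P i) (y i).1 t}).toFinset
  have hA : I.sigma A ⊆ (gball_finite hconn x r).toFinset := by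
    rintro ⟨i, p⟩ hp
    simp only [A, Finset.mem_sigma, Set.Finite.mem_toFinset, Set.mem_ofPred_eq,
      mem_gball_natCast] at hp ⊢
    have hyp := dist_mk_mk_le (hconn i) (y i) p
      (le_trans (by gcongr; exact hp.2) (hy i hp.1))
    have := (connected hconn).dist_triangle (u := x) (v := ⟨i, y i⟩) (w := ⟨i, p⟩)
    have := hx i hp.1
    omega
  calc ∑ i ∈ I, (gball (P i) (y i).1 t).ncard = ∑ i ∈ I, (A i).card :=
        Finset.sum_congr rfl fun i hi => by
          rw [← ncard_setOf_mem_gball (hconn i) _ _ (hy i hi), Set.ncard_eq_toFinset_card]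
    _ = (I.sigma A).card := (Finset.card_sigma _ _).symm
    _ ≤ _ := Finset.card_le_card hA
    _ = _ := (Set.ncard_eq_toFinset_card _ _).symm

lemma exists_ncard_gball_le_of_le_dist_root (hconn : ∀ n, (P n).Connected)
    (z : FibVert P o α n) {m t r : ℕ}
    (hm : m ≤ (P n).dist (o n) z.1) (htm : t ≤ m) (hr : m + t ≤ r) :
    ∃ y : W n, (gball (P n) y t).ncard ≤ (gball (SpineGlued P o α) ⟨n, z⟩ r).ncard := by
  obtain ⟨y, hoy, hyz⟩ := ((hconn n).preconnected (o n) z.1).exists_dist_le_dist_sub m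
  have hfib : ∀ s : ℕ, s ≤ m → ((P n).dist (o n) y + s : ℝ) ≤ (n : ℝ) ^ α :=
    fun s hs => le_trans (by exact_mod_cast (by omega : (P n).dist (o n) y + s ≤ _)) z.2
  let y' : FibVert P o α n := ⟨y, by simpa using hfib 0 (Nat.zero_le m)⟩
  have hzy : (SpineGlued P o α).dist ⟨n, z⟩ ⟨n, y'⟩ ≤ m := by
    rw [SimpleGraph.dist_comm]
    exact (dist_mk_mk_le (hconn n) y' z (hfib _ hyz)).trans hyz
  refine ⟨y, ?_⟩
  simpa using sum_ncard_gball_le hconn ⟨n, z⟩ r t {n} (Function.update (root P o α) n y')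
    (by simpa using hfib t htm) (by simpa using (by omega : _ + t ≤ r))

lemma sum_ncard_gball_root_le (hconn : ∀ n, (P n).Connected) (hα : 0 ≤ α)
    (z : FibVert P o α n) {q t r : ℕ}
    (ht : (t : ℝ) ≤ (q : ℝ) ^ α) (hr : (P n).dist (o n) z.1 + 2 * q + t ≤ r) :
    ∑ i ∈ Finset.Icc (n + q) (n + 2 * q), (gball (P i) (o i) t).ncard ≤
      (gball (SpineGlued P o α) ⟨n, z⟩ r).ncard := by
  refine sum_ncard_gball_le hconn ⟨n, z⟩ r t _ (root P o α) (fun i hi => ?_) (fun i hi => ?_)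
  all_goals obtain ⟨hni, hin⟩ := Finset.mem_Icc.1 hi
  · have hqi : (q : ℝ) ^ α ≤ (i : ℝ) ^ α := by gcongr; exact_mod_cast (by omega : q ≤ i)
    simpa [root] using ht.trans hqi
  · have h₁ := dist_root_root_le (P := P) (o := o) (α := α) (by omega : n ≤ i)
    have h₂ := dist_root_mk_le (hconn n) z
    have := (connected hconn).dist_triangle (u := ⟨n, z⟩) (v := ⟨n, root P o α n⟩)
      (w := ⟨i, root P o α i⟩)
    rw [SimpleGraph.dist_comm] at h₂
    omega

lemma le_ncard_gball_of_le_dist_root (hconn : ∀ n, (P n).Connected)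
    (hvol : ∀ (n : ℕ) (x : W n) (r : ℕ), 1 ≤ r → c * (r : ℝ) ^ δ ≤ (gball (P n) x r).ncard)
    (hc : 0 ≤ c) (hD : 0 ≤ D) (hDδ : D ≤ δ) {n r : ℕ} (z : FibVert P o α n) (hr : 4 ≤ r)
    (hz : r / 2 ≤ (P n).dist (o n) z.1) :
    c * ((r : ℝ) / 8) ^ D ≤ (gball (SpineGlued P o α) ⟨n, z⟩ r).ncard := by
  obtain ⟨y, hy⟩ := exists_ncard_gball_le_of_le_dist_root hconn z hz
    (by omega : r / 4 ≤ r / 2) (by omega : r / 2 + r / 4 ≤ r)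
  have ht : (1 : ℝ) ≤ (r / 4 : ℕ) := by exact_mod_cast (by omega : 1 ≤ r / 4)
  have hrt : (r : ℝ) / 8 ≤ (r / 4 : ℕ) := by
    rw [div_le_iff₀ (by norm_num)]
    exact_mod_cast (by omega : r ≤ r / 4 * 8)
  calc c * ((r : ℝ) / 8) ^ D ≤ c * ((r / 4 : ℕ) : ℝ) ^ D := by gcongr
    _ ≤ c * ((r / 4 : ℕ) : ℝ) ^ δ := by gcongr
    _ ≤ (gball (P n) y (r / 4 : ℕ)).ncard := hvol n y _ (by omega)
    _ ≤ _ := by exact_mod_cast hy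

lemma le_ncard_gball_of_dist_root_lt (hconn : ∀ n, (P n).Connected)
    (hvol : ∀ (n : ℕ) (x : W n) (r : ℕ), 1 ≤ r → c * (r : ℝ) ^ δ ≤ (gball (P n) x r).ncard)
    (hc : 0 ≤ c) (hD : 0 < D) (hδ : 0 ≤ δ) (hα₀ : 0 ≤ α) (hα₁ : α ≤ 1) (hαδ : α * δ = D - 1)
    {n r : ℕ} (z : FibVert P o α n) (hr : 8 ≤ r) (hz : (P n).dist (o n) z.1 < r / 2) :
    c / 2 ^ δ * ((r : ℝ) / 16) ^ D ≤ (gball (SpineGlued P o α) ⟨n, z⟩ r).ncard := by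
  set q := r / 8
  set t := ⌊(q : ℝ) ^ α⌋₊
  have hq : (1 : ℝ) ≤ q := by exact_mod_cast (by omega : 1 ≤ q)
  have hqα : 1 ≤ (q : ℝ) ^ α := Real.one_le_rpow hq hα₀
  have htqα : (t : ℝ) ≤ (q : ℝ) ^ α := Nat.floor_le (by positivity)
  have ht : 1 ≤ t := (Nat.one_le_floor_iff _).2 hqα
  have htq : t ≤ q := by exact_mod_cast htqα.trans (Real.rpow_le_self_of_one_le hq hα₁)
  have hqαt : (q : ℝ) ^ α / 2 ≤ t := by
    have := Nat.lt_floor_add_one ((q : ℝ) ^ α)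
    have : (1 : ℝ) ≤ t := by exact_mod_cast ht
    linarith
  have hrq : (r : ℝ) / 16 ≤ q := by
    rw [div_le_iff₀ (by norm_num)]
    exact_mod_cast (by omega : r ≤ q * 16)
  -- this is where `α = (D - 1) / δ` enters: `q` fibres of volume `≳ (q ^ α) ^ δ` give `q ^ D`
  have hqD : (q : ℝ) ^ D = q * ((q : ℝ) ^ α) ^ δ := by
    rw [← Real.rpow_mul (by positivity), hαδ, ← Real.rpow_one_add' (by positivity) (by linarith),
      add_sub_cancel]
  have hsum := sum_ncard_gball_root_le hconn hα₀ z htqα (by omega : _ + 2 * q + t ≤ r)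
  calc c / 2 ^ δ * ((r : ℝ) / 16) ^ D ≤ c / 2 ^ δ * (q : ℝ) ^ D := by gcongr
    _ = q * (c * ((q : ℝ) ^ α / 2) ^ δ) := by
      rw [hqD, Real.div_rpow (by positivity) (by norm_num)]
      ring
    _ ≤ (q + 1) * (c * (t : ℝ) ^ δ) := by gcongr; linarith
    _ = ∑ i ∈ Finset.Icc (n + q) (n + 2 * q), c * (t : ℝ) ^ δ := by
      rw [Finset.sum_const, Nat.card_Icc, show n + 2 * q + 1 - (n + q) = q + 1 by omega,
        nsmul_eq_mul]
      push_cast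
      ring
    _ ≤ ∑ i ∈ Finset.Icc (n + q) (n + 2 * q), ((gball (P i) (o i) t).ncard : ℝ) :=
      Finset.sum_le_sum fun i _ => hvol i (o i) t ht
    _ ≤ _ := by exact_mod_cast hsum

end

end SpineGlued

lemma exists_pos_mul_rpow_le {ι : Type*} (f : ι → ℕ → ℝ) {c D : ℝ} (hc : 0 < c) (hD : 0 ≤ D)
    (R : ℕ) (hone : ∀ i (r : ℕ), 1 ≤ r → 1 ≤ f i r)
    (hlarge : ∀ i (r : ℕ), R ≤ r → c * (r : ℝ) ^ D ≤ f i r) :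
    ∃ c' : ℝ, 0 < c' ∧ ∀ i (r : ℕ), 1 ≤ r → c' * (r : ℝ) ^ D ≤ f i r := by
  have hR : 0 < ((R : ℝ) + 1) ^ D := by positivity
  refine ⟨min c (((R : ℝ) + 1) ^ D)⁻¹, lt_min hc (inv_pos.2 hR), fun i r hr => ?_⟩
  rcases le_or_gt R r with hRr | hrR
  · exact le_trans (by gcongr; exact min_le_left _ _) (hlarge i r hRr)
  · calc min c (((R : ℝ) + 1) ^ D)⁻¹ * (r : ℝ) ^ D ≤ (((R : ℝ) + 1) ^ D)⁻¹ * ((R : ℝ) + 1) ^ D := by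
          gcongr
          · exact min_le_right _ _
          · exact_mod_cast hrR.le.trans (Nat.le_succ R)
      _ = 1 := inv_mul_cancel₀ hR.ne'
      _ ≤ f i r := hone i r hr

theorem stmt_18_general {W : ℕ → Type*} (P : ∀ n, SimpleGraph (W n)) (o : ∀ n, W n)
    (hconn : ∀ n, (P n).Connected)
    (δ D α : ℝ) (hD : 1 < D) (hδ : D < δ) (hα : α = (D - 1) / δ)
    (c C : ℝ) (hc : 0 < c)
    (hvol : ∀ (n : ℕ) (x : W n) (r : ℕ), 1 ≤ r →
      c * (r : ℝ) ^ δ ≤ ((gball (P n) x r).ncard : ℝ) ∧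
        ((gball (P n) x r).ncard : ℝ) ≤ C * (r : ℝ) ^ δ) :
    ∃ c' : ℝ, 0 < c' ∧ ∀ (x : Σ n, FibVert P o α n) (r : ℕ), 1 ≤ r →
      c' * (r : ℝ) ^ D ≤ ((gball (SpineGlued P o α) x (r : ℝ)).ncard : ℝ) := by
  have hδ₀ : 0 < δ := by linarith
  have hα₀ : 0 ≤ α := hα ▸ div_nonneg (by linarith) hδ₀.le
  have hα₁ : α ≤ 1 := by rw [hα, div_le_one hδ₀]; linarith
  have hαδ : α * δ = D - 1 := by rw [hα]; field_simp
  have hvol' := fun n x r hr => (hvol n x r hr).1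
  have : ∀ n, Finite (FibVert P o α n) := fun n => SpineGlued.finite_fibVert fun r hr =>
    Nat.cast_pos.1 ((mul_pos hc (by positivity)).trans_le (hvol' n (o n) r hr))
  refine exists_pos_mul_rpow_le _ (c := c / 2 ^ δ / 16 ^ D) (by positivity) (by linarith) 8
    (fun x r _ => ?_) (fun ⟨n, z⟩ r hr => ?_)
  · exact_mod_cast (Set.ncard_pos (SpineGlued.gball_finite hconn x r)).2
      ⟨x, mem_gball_self (by positivity)⟩
  rw [div_mul_eq_mul_div, mul_div_assoc, ← Real.div_rpow (by positivity) (by norm_num)]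
  rcases le_or_gt (r / 2) ((P n).dist (o n) z.1) with hz | hz
  · calc c / 2 ^ δ * ((r : ℝ) / 16) ^ D ≤ c * ((r : ℝ) / 8) ^ D := by
          gcongr
          · exact div_le_self hc.le (Real.one_le_rpow one_le_two hδ₀.le)
          · norm_num
      _ ≤ _ := SpineGlued.le_ncard_gball_of_le_dist_root hconn hvol' hc.le (by linarith) hδ.le z
          (by omega) hz
  · exact SpineGlued.le_ncard_gball_of_dist_root_lt hconn hvol' hc.le (by linarith) hδ₀.le hα₀
      hα₁ hαδ z hr hz

theorem stmt_18 {W : ℕ → Type*} (P : ∀ n, SimpleGraph (W n)) (o : ∀ n, W n)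
    (hconn : ∀ n, (P n).Connected)
    (δ D α : ℝ) (hD : 1 < D) (hδ : D < δ) (hα : α = (D - 1) / δ)
    (c C : ℝ) (hc : 0 < c) (hC : 0 < C)
    (hvol : ∀ (n : ℕ) (x : W n) (r : ℕ), 1 ≤ r →
      c * (r : ℝ) ^ δ ≤ ((gball (P n) x r).ncard : ℝ) ∧
        ((gball (P n) x r).ncard : ℝ) ≤ C * (r : ℝ) ^ δ)
    -- the graphs `P n` are doubling, with constants uniform in `n`:
    (Cd ν : ℝ) (hCd : 0 < Cd) (hν : 0 < ν)
    (hdoub : ∀ (n : ℕ) (x : W n) (r R : ℝ), 0 < r → r < R →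
      ((gball (P n) x R).ncard : ℝ) ≤ Cd * (R / r) ^ ν * ((gball (P n) x r).ncard : ℝ)) :
    ∃ c' : ℝ, 0 < c' ∧ ∀ (x : Σ n, FibVert P o α n) (r : ℕ), 1 ≤ r →
      c' * (r : ℝ) ^ D ≤ ((gball (SpineGlued P o α) x (r : ℝ)).ncard : ℝ) :=
  stmt_18_general P o hconn δ D α hD hδ hα c C hc hvol
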